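/- arXiv:2112.07509 — 2 statements merged into one kernel-verified Lean document; each statement's English description precedes it below -/
import Mathlib

section
/- Diffusion is confluent. -/
/-!
Formalization of the ranked-delegation (liquid democracy) setting of
"Liquid Democracy with Ranked Delegations".

Vertices are natural numbers.  An instance carries the vertex set `V`,
the edge set `E`, the distinguished set `C` of casting voters (which have
no outgoing edges), and a rank function such that for every vertex the
ranks of its outgoing edges are exactly `{1, ..., outdeg}`.
-/

namespace RankedDelegation

/-- A ranked delegation instance `(G, r)`. -/
structure Instance where
  V : Finset ℕ
  E : Finset (ℕ × ℕ)
  C : Finset ℕ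
  C_sub : C ⊆ V
  edge_mem : ∀ e ∈ E, e.1 ∈ V ∧ e.2 ∈ V
  C_no_out : ∀ e ∈ E, e.1 ∉ C
  rank : ℕ × ℕ → ℕ
  rank_prop : ∀ v ∈ V,
    (E.filter (fun e => e.1 = v)).image rank =
      Finset.Icc 1 (E.filter (fun e => e.1 = v)).card

/-- A simple path from `v` to a casting voter, represented by its list of
vertices (so it has at least one edge, i.e. at least two vertices). -/
def IsDelegPath (G : Instance) (v : ℕ) (p : List ℕ) : Prop :=
  2 ≤ p.length ∧ p.head? = some v ∧ p.Nodup ∧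
  (∀ e ∈ p.zip p.tail, e ∈ G.E) ∧
  (∃ c ∈ G.C, p.getLast? = some c)

/-- Delegating voters: members of `V` admitting a path to a casting voter.
(Casting voters have no outgoing edges, so they are never `Delegating`.) -/
def Delegating (G : Instance) (v : ℕ) : Prop :=
  v ∈ G.V ∧ ∃ p, IsDelegPath G v p

/-- Isolated voters: neither casting nor delegating. -/
def Isolated (G : Instance) (v : ℕ) : Prop :=
  v ∈ G.V ∧ v ∉ G.C ∧ ¬ Delegating G v

/-- The rank sequence `s(P)` of a path `P`. -/
def seqOf (G : Instance) (p : List ℕ) : List ℕ :=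
  (p.zip p.tail).map G.rank

/-- `S_v`, the set of rank sequences of paths from `v` to casting voters. -/
def Seqs (G : Instance) (v : ℕ) : Set (List ℕ) :=
  {s | ∃ p, IsDelegPath G v p ∧ seqOf G p = s}

/-- Membership in `𝒮`: all entries are positive. -/
def PosSeq (s : List ℕ) : Prop := ∀ x ∈ s, 1 ≤ x

/-- Two sequences are comparable if some instance realizes `S_v = {s, s'}`. -/
def Comparable (s s' : List ℕ) : Prop :=
  ∃ (G : Instance) (v : ℕ), Seqs G v = {s, s'}

/-- A set of sequences is comparable if its elements are pairwise comparable. -/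
def ComparableSet (S : Set (List ℕ)) : Prop := S.Pairwise Comparable

/-- `R` restricted to any comparable subset of `𝒮` is a (strict) linear order. -/
def LinearOnComparable (R : List ℕ → List ℕ → Prop) : Prop :=
  ∀ S : Set (List ℕ), ComparableSet S →
    (∀ s ∈ S, ¬ R s s) ∧
    (∀ s ∈ S, ∀ t ∈ S, ∀ u ∈ S, R s t → R t u → R s u) ∧
    (∀ s ∈ S, ∀ t ∈ S, s ≠ t → R s t ∨ R t s)

/-- `s` is the `R`-maximum (i.e. `R`-best) element of `S`. -/
def IsMaxOf (R : List ℕ → List ℕ → Prop) (S : Set (List ℕ)) (s : List ℕ) : Prop :=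
  s ∈ S ∧ ∀ t ∈ S, t ≠ s → R s t

/-- A delegation rule assigns to every instance and every delegating voter a
path from that voter to a casting voter. -/
structure DelegationRule where
  path : Instance → ℕ → List ℕ
  valid : ∀ G v, Delegating G v → IsDelegPath G v (path G v)

/-- `f` is a sequence rule induced by the relation `R`. -/
def IsSequenceRule (f : DelegationRule) (R : List ℕ → List ℕ → Prop) : Prop :=
  LinearOnComparable R ∧
  ∀ (G : Instance) (v : ℕ), Delegating G v →
    IsMaxOf R (Seqs G v) (seqOf G (f.path G v))

/-- Confluence: in the union of all selected paths, every delegating voter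
has outdegree exactly one. -/
def Confluent (f : DelegationRule) : Prop :=
  ∀ (G : Instance) (v : ℕ), Delegating G v →
    ∃! w : ℕ, ∃ u : ℕ, Delegating G u ∧
      (v, w) ∈ (f.path G u).zip (f.path G u).tail

/-- The (strict) lexicographic order `▷_lex` ("better than"). -/
def lexRel (s s' : List ℕ) : Prop := List.Lex (· < ·) s s'

/-- The order inducing breadth-first delegation: shorter first, ties by lex. -/
def bfdRel (s s' : List ℕ) : Prop :=
  s.length < s'.length ∨ (s.length = s'.length ∧ lexRel s s')

/-- The order inducing MinSum: smaller sum of ranks first, ties by lex. -/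
def minSumRel (s s' : List ℕ) : Prop :=
  s.sum < s'.sum ∨ (s.sum = s'.sum ∧ lexRel s s')

/-- `σ(s)`: the entries of `s` sorted in non-increasing order. -/
def sortDesc (s : List ℕ) : List ℕ := ((s : Multiset ℕ).sort (· ≤ ·)).reverse

/-- The order `▷_σ` inducing Leximax. -/
def leximaxRel (s s' : List ℕ) : Prop :=
  lexRel (sortDesc s) (sortDesc s') ∨ (sortDesc s = sortDesc s' ∧ lexRel s s')

/-- The set `F` of minimum-rank edges with head in `A` and tail outside `A`. -/
def diffF (G : Instance) (A : Finset ℕ) : Finset (ℕ × ℕ) :=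
  G.E.filter (fun e => e.2 ∈ A ∧ e.1 ∉ A ∧
    ∀ e' ∈ G.E, e'.2 ∈ A → e'.1 ∉ A → G.rank e ≤ G.rank e')

/-- The set of assigned voters after `k` rounds of the diffusion process
(initially the casting voters). -/
def diffA (G : Instance) : ℕ → Finset ℕ
  | 0 => G.C
  | k + 1 => diffA G k ∪ (diffF G (diffA G k)).image Prod.fst

/-- `f` is the Diffusion rule: every delegating voter `v` is assigned, at the
round where it acquires a minimum-rank edge `(v, w)` into the assigned set,
the path consisting of `(v, w)` followed by the path of `w`. -/
def IsDiffusion (f : DelegationRule) : Prop :=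
  ∀ (G : Instance) (v : ℕ), Delegating G v →
    ∃ (k : ℕ) (w : ℕ), (v, w) ∈ diffF G (diffA G k) ∧
      ((w ∈ G.C ∧ f.path G v = [v, w]) ∨
       (Delegating G w ∧ f.path G v = v :: f.path G w))

/-- Maximum entry of a sequence (0 for the empty sequence, by convention). -/
def maxR (s : List ℕ) : ℕ := s.foldr max 0

/-- Fuelled version of the diffusion order on sequences without a joint
prefix; the fuel only has to exceed the length of the first argument. -/
def diffRelAux : ℕ → List ℕ → List ℕ → Prop
  | 0, _, _ => False
  | n + 1, s, s' =>
    maxR s < maxR s' ∨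
    (maxR s = maxR s' ∧ s.count (maxR s) < s'.count (maxR s')) ∨
    (maxR s = maxR s' ∧ s.count (maxR s) = s'.count (maxR s') ∧
      (s.takeWhile (fun x => x ≠ maxR s) = [] ∨
        diffRelAux n (s.takeWhile (fun x => x ≠ maxR s))
          (s'.takeWhile (fun x => x ≠ maxR s'))))

/-- The diffusion order `▷_diff` for sequences with no joint prefix. -/
def diffRel0 (s s' : List ℕ) : Prop := diffRelAux (s.length + 1) s s'

/-- Strip the longest common prefix of two sequences. -/
def stripCP : List ℕ → List ℕ → List ℕ × List ℕ
  | a :: s, b :: s' => if a = b then stripCP s s' else (a :: s, b :: s')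
  | s, s' => (s, s')

/-- The diffusion order `▷_diff`. -/
def diffRel (s s' : List ℕ) : Prop :=
  diffRel0 (stripCP s s').1 (stripCP s s').2

/-- The relative voting weight `ω_f(G, r, c)` of a voter `c`. -/
noncomputable def weight (f : DelegationRule) (G : Instance) (c : ℕ) : ℚ :=
  ((Set.ncard {d | Delegating G d ∧ (f.path G d).getLast? = some c} : ℚ) + 1) /
    ((G.C.card : ℚ) + (Set.ncard {d | Delegating G d} : ℚ))

/-- Guru-participation: deleting the outgoing edges of a delegating voter `v`
(keeping the casting voters unchanged) does not decrease the relative weight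
of any casting voter other than `v`'s representative. -/
def GuruParticipation (f : DelegationRule) : Prop :=
  ∀ (G G' : Instance) (v c : ℕ),
    Delegating G v → (f.path G v).getLast? = some c →
    G'.V = G.V → G'.C = G.C → G'.rank = G.rank →
    G'.E = G.E.filter (fun e => e.1 ≠ v) →
    ∀ u ∈ G.C, u ≠ c → weight f G u ≤ weight f G' u

/-- Copy-robustness: if a delegating voter `v` is assigned a path of length
one ending in the casting voter `c`, then turning `v` into a casting voter
(deleting its outgoing edges) preserves the joint weight of `v` and `c`. -/
def CopyRobust (f : DelegationRule) : Prop :=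
  ∀ (G G' : Instance) (v c : ℕ),
    Delegating G v → (f.path G v).length = 2 →
    (f.path G v).getLast? = some c →
    G'.V = G.V → G'.C = insert v G.C → G'.rank = G.rank →
    G'.E = G.E.filter (fun e => e.1 ≠ v) →
    weight f G c = weight f G' c + weight f G' v

/-- A directed cycle through the edge set `B`, given as a nonempty list of
consecutive edges whose last edge returns to the head of the first one. -/
def IsEdgeCycle (B : Finset (ℕ × ℕ)) (l : List (ℕ × ℕ)) : Prop :=
  l ≠ [] ∧ (∀ e ∈ l, e ∈ B) ∧ List.Chain' (fun e e' => e.2 = e'.1) l ∧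
  ∃ e₁ e₂, l.head? = some e₁ ∧ l.getLast? = some e₂ ∧ e₂.2 = e₁.1

def Acyclic (B : Finset (ℕ × ℕ)) : Prop := ¬ ∃ l, IsEdgeCycle B l

/-- Edges of the reduced graph `Ḡ`: edges of `G` between voters of `C ∪ D`. -/
def InReduced (G : Instance) (e : ℕ × ℕ) : Prop :=
  e ∈ G.E ∧ (e.1 ∈ G.C ∨ Delegating G e.1) ∧ (e.2 ∈ G.C ∨ Delegating G e.2)

/-- A `C`-branching in the reduced graph: an acyclic set of reduced edges in
which every delegating voter has outdegree exactly one. -/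
def IsCBranching (G : Instance) (B : Finset (ℕ × ℕ)) : Prop :=
  (∀ e ∈ B, InReduced G e) ∧ Acyclic B ∧
  ∀ v : ℕ, Delegating G v → ∃! w : ℕ, (v, w) ∈ B

/-- The Borda score of a branching: the sum of the ranks of its edges. -/
def score (G : Instance) (B : Finset (ℕ × ℕ)) : ℕ := ∑ e ∈ B, G.rank e

/-- The rank of the (unique) outgoing edge of `v` in `B` (0 if none). -/
def rankOut (G : Instance) (B : Finset (ℕ × ℕ)) (v : ℕ) : ℕ :=
  ∑ e ∈ B.filter (fun e => e.1 = v), G.rank e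

/-- Priority-order tie-breaking: `B` is preferred to `B'` if some (delegating)
voter `v₀` gets a strictly smaller rank in `B`, while all delegating voters
with smaller priority get equal ranks in `B` and `B'`. -/
def PrioPref (G : Instance) (π : ℕ → ℕ) (B B' : Finset (ℕ × ℕ)) : Prop :=
  ∃ v₀ : ℕ, Delegating G v₀ ∧ rankOut G B v₀ < rankOut G B' v₀ ∧
    ∀ v : ℕ, Delegating G v → π v < π v₀ → rankOut G B v = rankOut G B' v

/-- `f` is BordaBranching with priority order `π`: on every instance the
paths of `f` are read off from a rank-sum-minimal `C`-branching which is
moreover preferred (w.r.t. `π`) to every other minimal `C`-branching. -/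
def IsBordaBranching (f : DelegationRule) (π : ℕ → ℕ) : Prop :=
  Function.Injective π ∧
  ∀ G : Instance, ∃ B : Finset (ℕ × ℕ), IsCBranching G B ∧
    (∀ B', IsCBranching G B' → score G B ≤ score G B') ∧
    (∀ B', IsCBranching G B' → score G B' = score G B → B' ≠ B → PrioPref G π B B') ∧
    (∀ v : ℕ, Delegating G v → ∀ e ∈ (f.path G v).zip (f.path G v).tail, e ∈ B)

/-- Weakly lexicographic: on comparable sequences of equal length differing
only in the last entry, `R` agrees with the lexicographic order. -/
def WeaklyLex (R : List ℕ → List ℕ → Prop) : Prop :=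
  ∀ (t : List ℕ) (a b : ℕ), Comparable (t ++ [a]) (t ++ [b]) →
    (R (t ++ [a]) (t ++ [b]) ↔ lexRel (t ++ [a]) (t ++ [b]))

/-- Strongly lexicographic: on comparable sequences of equal length, `R`
agrees with the lexicographic order. -/
def StronglyLex (R : List ℕ → List ℕ → Prop) : Prop :=
  ∀ s s' : List ℕ, Comparable s s' → s.length = s'.length →
    (R s s' ↔ lexRel s s')

/-- Rank-awareness: among comparable sequences, one with a strictly smaller
maximum entry is preferred. -/
def RankAware (R : List ℕ → List ℕ → Prop) : Prop :=
  ∀ s s' : List ℕ, Comparable s s' → maxR s < maxR s' → R s s'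

/-- Two sequences have no joint prefix (their heads differ, if any). -/
def NoJointPrefix (s s' : List ℕ) : Prop :=
  ∀ a : ℕ, ¬ (s.head? = some a ∧ s'.head? = some a)

/-- Truncation: comparisons may be decided on the parts before a dominating
joint entry `x`. -/
def Truncation (R : List ℕ → List ℕ → Prop) : Prop :=
  ∀ s s' t t' : List ℕ, PosSeq s → PosSeq s' → PosSeq t → PosSeq t' →
    Comparable s s' → NoJointPrefix s s' →
    ∀ x : ℕ, 1 ≤ x → maxR t < x → maxR t' < x →
    R (s ++ x :: t) (s' ++ x :: t') → R s s'

/-!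
Diffusion chooses for `v` its first edge `(v, w)` followed by the path already chosen for `w`.
By induction along a chosen path, every edge `(a, b)` on it is therefore the first edge of the path
chosen for `a`, so `a` has exactly one outgoing edge in the union of the chosen paths.
-/

theorem IsDelegPath.exists_eq_cons_cons {G : Instance} {v : ℕ} {p : List ℕ}
    (hp : IsDelegPath G v p) : ∃ w l, p = v :: w :: l := by
  obtain ⟨hlen, hhead, -⟩ := hp
  match p, hlen, hhead with
  | a :: w :: l, _, hhead => exact ⟨w, l, by simpa using hhead⟩

theorem IsDiffusion.exists_path_eq_cons_cons_of_mem_zip {f : DelegationRule}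
    (hf : IsDiffusion f) {G : Instance} {u : ℕ} (hu : Delegating G u) {a b : ℕ}
    (hab : (a, b) ∈ (f.path G u).zip (f.path G u).tail) : ∃ l, f.path G a = a :: b :: l := by
  obtain ⟨-, w, -, ⟨-, hpath⟩ | ⟨hw, hpath⟩⟩ := hf G u hu
  · rw [hpath] at hab
    obtain ⟨rfl, rfl⟩ : a = u ∧ b = w := by simpa using hab
    exact ⟨[], hpath⟩
  · obtain ⟨c, l, hwpath⟩ := (f.valid G w hw).exists_eq_cons_cons
    have hab' : (a = u ∧ b = w) ∨ (a, b) ∈ (f.path G w).zip (f.path G w).tail := by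
      rw [hpath, hwpath] at hab
      simpa [hwpath] using hab
    rcases hab' with ⟨rfl, rfl⟩ | hab'
    · exact ⟨c :: l, hpath.trans (congrArg _ hwpath)⟩
    · exact hf.exists_path_eq_cons_cons_of_mem_zip hw hab'
termination_by (f.path G u).length
decreasing_by rw [hpath]; simp

/-- Diffusion is confluent. -/
theorem diffusion_confluent (f : DelegationRule) (hf : IsDiffusion f) :
    Confluent f := by
  intro G v hv
  obtain ⟨w, l, hvpath⟩ := (f.valid G v hv).exists_eq_cons_cons
  refine ⟨w, ⟨v, hv, by simp [hvpath]⟩, ?_⟩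
  rintro w' ⟨u, hu, hvw'⟩
  obtain ⟨l', hvpath'⟩ := hf.exists_path_eq_cons_cons_of_mem_zip hu hvw'
  rw [hvpath] at hvpath'
  simp only [List.cons.injEq, true_and] at hvpath'
  exact hvpath'.1.symm

end RankedDelegation
end

section
/- Leximax is confluent. -/
/-!
Formalization of the ranked-delegation (liquid democracy) setting of
"Liquid Democracy with Ranked Delegations".

Vertices are natural numbers.  An instance carries the vertex set `V`,
the edge set `E`, the distinguished set `C` of casting voters (which have
no outgoing edges), and a rank function such that for every vertex the
ranks of its outgoing edges are exactly `{1, ..., outdeg}`.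
-/

namespace RankedDelegation

-- AUXILIARY DEVELOPMENT (to be inserted before leximax_confluent)
section Aux

local instance : IsAntisymm ℕ (fun x y : ℕ => y ≤ x) := ⟨fun _ _ h1 h2 => le_antisymm h2 h1⟩

/-- abbreviation for the strict lex relation -/
abbrev LexR : List ℕ → List ℕ → Prop := List.Lex (· < ·)

lemma lex_irrefl (s : List ℕ) : ¬ LexR s s := irrefl s

lemma lex_asymm {s t : List ℕ} (h : LexR s t) : ¬ LexR t s := asymm h

lemma lex_append_left (s : List ℕ) {t t' : List ℕ} (h : LexR t t') :
    LexR (s ++ t) (s ++ t') := by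
  induction s with
  | nil => simpa using h
  | cons a s ih => exact List.Lex.cons ih

lemma leximax_asymm {s t : List ℕ} (h : leximaxRel s t) (h' : leximaxRel t s) : False := by
  rcases h with h | ⟨he, h⟩ <;> rcases h' with h' | ⟨he', h'⟩
  · exact lex_asymm h h'
  · rw [he'] at h; exact lex_irrefl _ h
  · rw [he] at h'; exact lex_irrefl _ h'
  · exact lex_asymm h h'

/-! ### sorted-descending lists of multisets -/

/-- sorted-descending list of a multiset -/
def sdm (m : Multiset ℕ) : List ℕ := (m.sort (· ≤ ·)).reverse

lemma sortDesc_eq (s : List ℕ) : sortDesc s = sdm (↑s) := rfl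

lemma sdm_coe (m : Multiset ℕ) : (↑(sdm m) : Multiset ℕ) = m := by
  have h1 : (↑((m.sort (· ≤ ·)).reverse) : Multiset ℕ) = ↑(m.sort (· ≤ ·)) :=
    Multiset.coe_eq_coe.mpr (List.reverse_perm _)
  rw [sdm, h1, Multiset.sort_eq]

lemma sdm_sorted (m : Multiset ℕ) : (sdm m).Pairwise (fun x y : ℕ => y ≤ x) := by
  unfold sdm
  exact List.pairwise_reverse.mpr (Multiset.pairwise_sort m (· ≤ ·))

lemma sdm_eq {l : List ℕ} (h : l.Pairwise (fun x y : ℕ => y ≤ x)) : sdm (↑l) = l := by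
  refine List.Perm.eq_of_pairwise' (sdm_sorted _) h ?_
  exact Multiset.coe_eq_coe.mp (sdm_coe _)

/-- insertion into a descending list -/
def dins (a : ℕ) : List ℕ → List ℕ
  | [] => [a]
  | b :: t => if b ≤ a then a :: b :: t else b :: dins a t

lemma dins_perm (a : ℕ) (l : List ℕ) : (dins a l).Perm (a :: l) := by
  induction l with
  | nil => exact List.Perm.refl _
  | cons b t ih =>
    unfold dins
    split
    · exact List.Perm.refl _
    · exact (List.Perm.cons b ih).trans (List.Perm.swap a b t)

lemma dins_sorted {l : List ℕ} (a : ℕ) (h : l.Pairwise (fun x y : ℕ => y ≤ x)) :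
    (dins a l).Pairwise (fun x y : ℕ => y ≤ x) := by
  induction l with
  | nil => simp [dins]
  | cons b t ih =>
    rw [List.pairwise_cons] at h
    unfold dins
    split
    · rename_i hba
      refine List.pairwise_cons.mpr ⟨?_, List.pairwise_cons.mpr h⟩
      intro y hy
      rcases List.mem_cons.mp hy with rfl | hy
      · exact hba
      · exact (h.1 y hy).trans hba
    · rename_i hba
      refine List.pairwise_cons.mpr ⟨?_, ih h.2⟩
      intro y hy
      have : y ∈ a :: t := (dins_perm a t).mem_iff.mp hy
      rcases List.mem_cons.mp this with rfl | hy
      · exact le_of_not_ge hba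
      · exact h.1 y hy

lemma sdm_cons (a : ℕ) (m : Multiset ℕ) : sdm (a ::ₘ m) = dins a (sdm m) := by
  have hperm : (dins a (sdm m) : List ℕ).Perm (a :: sdm m) := dins_perm a (sdm m)
  have hcoe : (↑(dins a (sdm m)) : Multiset ℕ) = a ::ₘ m := by
    rw [Multiset.coe_eq_coe.mpr hperm]
    rw [← Multiset.cons_coe, sdm_coe]
  calc sdm (a ::ₘ m) = sdm ↑(dins a (sdm m)) := by rw [hcoe]
    _ = dins a (sdm m) := sdm_eq (dins_sorted a (sdm_sorted m))

lemma dins_lex (a : ℕ) : ∀ {l l' : List ℕ}, LexR l l' → LexR (dins a l) (dins a l') := by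
  intro l l' h
  induction h with
  | @nil c t' =>
    show LexR [a] (dins a (c :: t'))
    unfold dins
    split
    · exact List.Lex.cons List.Lex.nil
    · exact List.Lex.rel (by omega)
  | @cons b t t' h ih =>
    show LexR (dins a (b :: t)) (dins a (b :: t'))
    unfold dins
    split
    · exact List.Lex.cons (List.Lex.cons h)
    · exact List.Lex.cons ih
  | @rel b t c t' hbc =>
    show LexR (dins a (b :: t)) (dins a (c :: t'))
    unfold dins
    split <;> split
    · exact List.Lex.cons (List.Lex.rel hbc)
    · rename_i h1 h2; exact List.Lex.rel (by omega)
    · rename_i h1 h2; omega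
    · exact List.Lex.rel hbc

lemma sdm_add_lex (n : Multiset ℕ) {m m' : Multiset ℕ}
    (h : LexR (sdm m) (sdm m')) : LexR (sdm (n + m)) (sdm (n + m')) := by
  induction n using Multiset.induction with
  | empty => simpa using h
  | cons a n ih =>
    rw [Multiset.cons_add, Multiset.cons_add, sdm_cons, sdm_cons]
    exact dins_lex a ih

lemma sdm_lt_lex_aux : ∀ (n : ℕ) (m m' : Multiset ℕ), Multiset.card m' ≤ n →
    m < m' → LexR (sdm m) (sdm m') := by
  intro n
  induction n with
  | zero =>
    intro m m' hc h
    rw [Nat.le_zero, Multiset.card_eq_zero] at hc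
    subst hc
    exact absurd (Multiset.le_zero.mp h.le) (by rintro rfl; exact lt_irrefl _ h)
  | succ n ih =>
    intro m m' hc h
    cases hm' : sdm m' with
    | nil =>
      exfalso
      have : m' = 0 := by
        have := sdm_coe m'
        rw [hm'] at this
        simpa using this.symm
      subst this
      exact absurd (Multiset.le_zero.mp h.le) (by rintro rfl; exact lt_irrefl _ h)
    | cons c t' =>
      cases hm : sdm m with
      | nil => exact List.Lex.nil
      | cons b t =>
        have hmcoe : (↑(b :: t) : Multiset ℕ) = m := by rw [← hm, sdm_coe]
        have hm'coe : (↑(c :: t') : Multiset ℕ) = m' := by rw [← hm', sdm_coe]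
        have hbm : b ∈ m := by rw [← hmcoe]; exact Multiset.mem_coe.mpr (List.mem_cons_self)
        have hbm' : b ∈ m' := Multiset.mem_of_le h.le hbm
        have hsort' : (c :: t').Pairwise (fun x y : ℕ => y ≤ x) := by rw [← hm']; exact sdm_sorted m'
        have hbc : b ≤ c := by
          have : b ∈ c :: t' := Multiset.mem_coe.mp (by rw [hm'coe]; exact hbm')
          rcases List.mem_cons.mp this with rfl | hbt'
          · exact le_refl b
          · exact (List.pairwise_cons.mp hsort').1 b hbt'
        rcases lt_or_eq_of_le hbc with hlt | rfl
        · exact List.Lex.rel hlt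
        · -- b = c
          have hsort : (b :: t).Pairwise (fun x y : ℕ => y ≤ x) := by rw [← hm]; exact sdm_sorted m
          have ht : (↑t : Multiset ℕ) = m.erase b := by
            rw [← hmcoe, ← Multiset.cons_coe, Multiset.erase_cons_head]
          have ht' : (↑t' : Multiset ℕ) = m'.erase b := by
            rw [← hm'coe, ← Multiset.cons_coe, Multiset.erase_cons_head]
          have hle2 : m.erase b ≤ m'.erase b := Multiset.erase_le_erase b h.le
          have hne2 : m.erase b ≠ m'.erase b := by
            intro hcontra
            have h1 : b ::ₘ m.erase b = m := Multiset.cons_erase hbm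
            have h2 : b ::ₘ m'.erase b = m' := Multiset.cons_erase hbm'
            exact absurd (h1.symm.trans (by rw [hcontra, h2])) (ne_of_lt h)
          have hcard2 : Multiset.card (m'.erase b) ≤ n := by
            simp only [Multiset.card_erase_of_mem hbm', Nat.pred_eq_sub_one]
            omega
          have hrec := ih (m.erase b) (m'.erase b) hcard2 (lt_of_le_of_ne hle2 hne2)
          rw [← ht, ← ht', sdm_eq (List.pairwise_cons.mp hsort).2,
            sdm_eq (List.pairwise_cons.mp hsort').2] at hrec
          exact List.Lex.cons hrec

lemma sdm_lt_lex {m m' : Multiset ℕ} (h : m < m') : LexR (sdm m) (sdm m') :=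
  sdm_lt_lex_aux (Multiset.card m') m m' le_rfl h

lemma sdm_le_lex {m m' : Multiset ℕ} (h : m ≤ m') :
    LexR (sdm m) (sdm m') ∨ m = m' := by
  rcases lt_or_eq_of_le h with h | h
  · exact Or.inl (sdm_lt_lex h)
  · exact Or.inr h

/-! ### paths and walks -/

/-- consecutive edges of a vertex list -/
def edges (l : List ℕ) : List (ℕ × ℕ) := l.zip l.tail

lemma edges_cons_cons (a b : ℕ) (l : List ℕ) :
    edges (a :: b :: l) = (a, b) :: edges (b :: l) := rfl

lemma seqOf_eq (G : Instance) (p : List ℕ) : seqOf G p = (edges p).map G.rank := rfl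

lemma edges_append : ∀ (l₁ : List ℕ) (a : ℕ) (l₂ : List ℕ),
    edges (l₁ ++ a :: l₂) = edges (l₁ ++ [a]) ++ edges (a :: l₂) := by
  intro l₁
  induction l₁ with
  | nil => intro a l₂; simp [edges]
  | cons b l₁ ih =>
    intro a l₂
    cases l₁ with
    | nil => simp [edges_cons_cons, edges]
    | cons c l₁' =>
      have h1 : (b :: c :: l₁') ++ a :: l₂ = b :: (c :: l₁' ++ a :: l₂) := rfl
      have h2 : c :: l₁' ++ a :: l₂ = c :: (l₁' ++ a :: l₂) := rfl
      rw [h1, h2, edges_cons_cons, ← h2, ih a l₂]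
      rfl

lemma seqOf_append (G : Instance) (l₁ : List ℕ) (a : ℕ) (l₂ : List ℕ) :
    seqOf G (l₁ ++ a :: l₂) = seqOf G (l₁ ++ [a]) ++ seqOf G (a :: l₂) := by
  rw [seqOf_eq, seqOf_eq, seqOf_eq, edges_append, List.map_append]

lemma mem_edges_split {p : List ℕ} {v w : ℕ} (h : (v, w) ∈ edges p) :
    ∃ A B, p = A ++ v :: w :: B := by
  induction p with
  | nil => simp [edges] at h
  | cons a t ih =>
    cases t with
    | nil => simp [edges] at h
    | cons b t' =>
      rw [edges_cons_cons] at h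
      rcases List.mem_cons.mp h with heq | hmem
      · obtain ⟨rfl, rfl⟩ := Prod.mk.injEq .. ▸ (Prod.ext_iff.mp heq)
        exact ⟨[], t', rfl⟩
      · obtain ⟨A, B, hAB⟩ := ih hmem
        exact ⟨a :: A, B, by rw [hAB]; rfl⟩

lemma not_nodup_split {l : List ℕ} (h : ¬ l.Nodup) :
    ∃ x A B C, l = A ++ x :: (B ++ x :: C) := by
  induction l with
  | nil => simp at h
  | cons a t ih =>
    rw [List.nodup_cons] at h
    push_neg at h
    by_cases ha : a ∈ t
    · obtain ⟨B, C, rfl⟩ := List.append_of_mem ha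
      exact ⟨a, [], B, C, rfl⟩
    · obtain ⟨x, A, B, C, rfl⟩ := ih (h ha)
      exact ⟨x, a :: A, B, C, rfl⟩

lemma head?_append_cons (A : List ℕ) (v : ℕ) (L L' : List ℕ) :
    (A ++ v :: L).head? = (A ++ v :: L').head? := by
  cases A <;> simp

lemma getLast?_append_cons (A : List ℕ) (v : ℕ) (L : List ℕ) :
    (A ++ v :: L).getLast? = (v :: L).getLast? := by
  rw [List.getLast?_append]
  cases h : (v :: L).getLast? with
  | none => simp at h
  | some z => rfl

lemma extract (G : Instance) : ∀ (n : ℕ) (W : List ℕ) (u : ℕ), W.length ≤ n →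
    2 ≤ W.length → W.head? = some u → (∀ e ∈ edges W, e ∈ G.E) →
    (∃ c ∈ G.C, W.getLast? = some c) →
    ∃ P, IsDelegPath G u P ∧ (↑(seqOf G P) : Multiset ℕ) ≤ ↑(seqOf G W) ∧
      (¬ W.Nodup → (↑(seqOf G P) : Multiset ℕ) < ↑(seqOf G W)) := by
  intro n
  induction n with
  | zero => intro W u hn h2 _ _ _; omega
  | succ n ih =>
    intro W u hn h2 hhead hE hlast
    by_cases hnd : W.Nodup
    · exact ⟨W, ⟨h2, hhead, hnd, hE, hlast⟩, le_refl _, fun h => absurd hnd h⟩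
    · obtain ⟨x, A, B, C, hW⟩ := not_nodup_split hnd
      have hWalt : W = (A ++ x :: B) ++ x :: C := by rw [hW]; simp
      have e1 : edges W = edges (A ++ [x]) ++ (edges (x :: B ++ [x]) ++ edges (x :: C)) := by
        rw [hW, edges_append A x (B ++ x :: C)]
        congr 1
        have h3 : x :: (B ++ x :: C) = (x :: B) ++ x :: C := rfl
        rw [h3, edges_append (x :: B) x C]
      set W' := A ++ x :: C with hW'def
      have e2 : edges W' = edges (A ++ [x]) ++ edges (x :: C) := edges_append A x C
      have hlen' : W'.length < W.length := by
        rw [hW, hW'def]; simp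
      have hhead' : W'.head? = some u := by
        rw [hW] at hhead
        rw [hW'def, head?_append_cons A x C (B ++ x :: C)]
        exact hhead
      have hlast' : ∃ c ∈ G.C, W'.getLast? = some c := by
        obtain ⟨c, hc, hcl⟩ := hlast
        refine ⟨c, hc, ?_⟩
        rw [hWalt, getLast?_append_cons] at hcl
        rw [hW'def, getLast?_append_cons]
        exact hcl
      have hE' : ∀ e ∈ edges W', e ∈ G.E := by
        intro e he
        apply hE
        rw [e1]
        rw [e2] at he
        rcases List.mem_append.mp he with h | h
        · exact List.mem_append.mpr (Or.inl h)
        · exact List.mem_append.mpr (Or.inr (List.mem_append.mpr (Or.inr h)))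
      have h2' : 2 ≤ W'.length := by
        by_contra hlt2
        push_neg at hlt2
        have hA : A = [] := by
          apply List.length_eq_zero_iff.mp
          rw [hW'def] at hlt2; simp at hlt2; omega
        have hC : C = [] := by
          apply List.length_eq_zero_iff.mp
          rw [hW'def] at hlt2; simp at hlt2; omega
        subst hA; subst hC
        -- W = x :: (B ++ [x]); its last is x ∈ C, but its first edge leaves x
        obtain ⟨c, hc, hcl⟩ := hlast
        have hcx : c = x := by
          rw [hWalt] at hcl
          simp only [List.nil_append] at hcl
          rw [getLast?_append_cons (x :: B) x []] at hcl
          simp at hcl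
          exact hcl.symm
        obtain ⟨y, R, hyR⟩ := List.exists_cons_of_ne_nil (show B ++ [x] ≠ [] by simp)
        have hWxy : W = x :: y :: R := by
          rw [hW]; simp only [List.nil_append]
          rw [show B ++ x :: ([] : List ℕ) = B ++ [x] from rfl, hyR]
        have : (x, y) ∈ G.E := by
          apply hE
          rw [hWxy, edges_cons_cons]
          exact List.mem_cons_self
        exact G.C_no_out (x, y) this (hcx ▸ hc)
      have hmid : edges (x :: B ++ [x]) ≠ [] := by
        cases B <;> simp [edges_cons_cons, edges]
      have hlt : (↑(seqOf G W') : Multiset ℕ) < ↑(seqOf G W) := by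
        rw [seqOf_eq, seqOf_eq, e1, e2]
        rw [List.map_append, List.map_append, List.map_append]
        rw [← Multiset.coe_add, ← Multiset.coe_add, ← Multiset.coe_add]
        apply add_lt_add_right
        apply lt_add_of_pos_left
        apply lt_of_le_of_ne zero_le
        intro hzero
        have : ((edges (x :: B ++ [x])).map G.rank : List ℕ) = [] := by
          rw [← Multiset.coe_eq_zero]; exact hzero.symm
        rw [List.map_eq_nil_iff] at this
        exact hmid this
      obtain ⟨P, hP, hle, _⟩ := ih W' u (by omega) h2' hhead' hE' hlast'
      exact ⟨P, hP, hle.trans hlt.le, fun _ => lt_of_le_of_lt hle hlt⟩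

lemma no_better (f : DelegationRule) (hf : IsSequenceRule f leximaxRel) (G : Instance)
    (u : ℕ) (hu : Delegating G u) (A B : List ℕ) (v : ℕ)
    (hp : f.path G u = A ++ v :: B) (hB : B ≠ [])
    (q' : List ℕ) (hq' : IsDelegPath G v q') :
    ¬ leximaxRel (seqOf G q') (seqOf G (v :: B)) := by
  intro hbad
  obtain ⟨_, hmax⟩ := hf.2 G u hu
  have hpu := f.valid G u hu
  obtain ⟨hl2, hh, hnd, hEp, c0, hc0, hlastp⟩ := hpu
  obtain ⟨hl2', hh', hnd', hEq', c', hc', hlast'⟩ := hq'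
  obtain ⟨q't, rfl⟩ : ∃ t, q' = v :: t := by
    cases q' with
    | nil => simp at hh'
    | cons a t =>
      simp at hh'
      exact ⟨t, by rw [hh']⟩
  set W := A ++ v :: q't with hWdef
  have hsp : seqOf G (f.path G u) = seqOf G (A ++ [v]) ++ seqOf G (v :: B) := by
    rw [hp]; exact seqOf_append G A v B
  have hsW : seqOf G W = seqOf G (A ++ [v]) ++ seqOf G (v :: q't) := seqOf_append G A v q't
  have h2W : 2 ≤ W.length := by
    have h1 : 2 ≤ (v :: q't).length := hl2'
    rw [hWdef]
    simp only [List.length_append]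
    omega
  have hheadW : W.head? = some u := by
    rw [hp] at hh
    rw [hWdef, head?_append_cons A v q't B]
    exact hh
  have hEpu : edges (f.path G u) = edges (A ++ [v]) ++ edges (v :: B) := by
    rw [hp]; exact edges_append A v B
  have hEW : ∀ e ∈ edges W, e ∈ G.E := by
    intro e he
    rw [hWdef, edges_append A v q't] at he
    rcases List.mem_append.mp he with h | h
    · apply hEp
      show e ∈ edges (f.path G u)
      rw [hEpu]
      exact List.mem_append.mpr (Or.inl h)
    · exact hEq' e h
  have hlastW : ∃ c ∈ G.C, W.getLast? = some c :=
    ⟨c', hc', by rw [hWdef, getLast?_append_cons]; exact hlast'⟩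
  obtain ⟨P, hP, hle, hstrict⟩ := extract G W.length W u le_rfl h2W hheadW hEW hlastW
  have hPin : seqOf G P ∈ Seqs G u := ⟨P, hP, rfl⟩
  rcases hbad with hlex | ⟨heq, hlex⟩
  · rw [sortDesc_eq, sortDesc_eq] at hlex
    have h1 : LexR (sdm ↑(seqOf G W)) (sdm ↑(seqOf G (f.path G u))) := by
      rw [hsW, hsp, ← Multiset.coe_add, ← Multiset.coe_add]
      exact sdm_add_lex _ hlex
    have h2 : LexR (sdm ↑(seqOf G P)) (sdm ↑(seqOf G (f.path G u))) := by
      rcases sdm_le_lex hle with h | h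
      · exact List.lex_trans (fun a b => Nat.lt_trans a b) h h1
      · rw [h]; exact h1
    have hne : seqOf G P ≠ seqOf G (f.path G u) := by
      intro hh2; rw [hh2] at h2; exact lex_irrefl _ h2
    exact leximax_asymm (Or.inl h2) (hmax _ hPin hne)
  · rw [sortDesc_eq, sortDesc_eq] at heq
    have hmeq : (↑(seqOf G (v :: q't)) : Multiset ℕ) = ↑(seqOf G (v :: B)) := by
      have := congrArg (fun l : List ℕ => (↑l : Multiset ℕ)) heq
      simpa [sdm_coe] using this
    have hWp : (↑(seqOf G W) : Multiset ℕ) = ↑(seqOf G (f.path G u)) := by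
      rw [hsW, hsp, ← Multiset.coe_add, ← Multiset.coe_add, hmeq]
    by_cases hndW : W.Nodup
    · have hWin : seqOf G W ∈ Seqs G u := ⟨W, ⟨h2W, hheadW, hndW, hEW, hlastW⟩, rfl⟩
      have hlexW : LexR (seqOf G W) (seqOf G (f.path G u)) := by
        rw [hsW, hsp]; exact lex_append_left _ hlex
      have hne : seqOf G W ≠ seqOf G (f.path G u) := by
        intro hh2; rw [hh2] at hlexW; exact lex_irrefl _ hlexW
      have hlm : leximaxRel (seqOf G W) (seqOf G (f.path G u)) :=
        Or.inr ⟨by rw [sortDesc_eq, sortDesc_eq, hWp], hlexW⟩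
      exact leximax_asymm hlm (hmax _ hWin hne)
    · have hlt := hstrict hndW
      rw [hWp] at hlt
      have h2 := sdm_lt_lex hlt
      have hne : seqOf G P ≠ seqOf G (f.path G u) := by
        intro hh2; rw [hh2] at h2; exact lex_irrefl _ h2
      exact leximax_asymm (Or.inl h2) (hmax _ hPin hne)

end Aux

/-- Leximax is confluent. -/
theorem leximax_confluent (f : DelegationRule) (hf : IsSequenceRule f leximaxRel) :
    Confluent f := by
  intro G v hv
  have hp₀ := f.valid G v hv
  obtain ⟨hl2, hh, hnd0, hE0, c0, hc0, hlast0⟩ := hp₀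
  obtain ⟨w₀, t₀, hp₀e⟩ : ∃ w₀ t₀, f.path G v = v :: w₀ :: t₀ := by
    cases hpv : f.path G v with
    | nil => rw [hpv] at hl2; simp at hl2
    | cons a t =>
      cases t with
      | nil => rw [hpv] at hl2; simp at hl2
      | cons b t' =>
        rw [hpv] at hh
        simp at hh
        exact ⟨b, t', by rw [hh]⟩
  refine ⟨w₀, ⟨v, hv, ?_⟩, ?_⟩
  · rw [hp₀e]
    show (v, w₀) ∈ (v :: w₀ :: t₀).zip (w₀ :: t₀)
    rw [List.zip_cons_cons]
    exact List.mem_cons_self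
  · rintro w ⟨u, hu, hmem⟩
    have hpu := f.valid G u hu
    obtain ⟨hl2u, hhu, hndu, hEu, cu, hcu, hlastu⟩ := hpu
    obtain ⟨A, B, hAB⟩ := mem_edges_split (show (v, w) ∈ edges (f.path G u) from hmem)
    have hq : IsDelegPath G v (v :: w :: B) := by
      refine ⟨by simp, rfl, ?_, ?_, ?_⟩
      · have hsub : List.Sublist (v :: w :: B) (f.path G u) := by
          rw [hAB]; exact List.sublist_append_right A _
        exact hndu.sublist hsub
      · intro e he
        apply hEu
        show e ∈ edges (f.path G u)
        rw [hAB, edges_append A v (w :: B)]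
        exact List.mem_append.mpr (Or.inr he)
      · refine ⟨cu, hcu, ?_⟩
        rw [hAB, getLast?_append_cons] at hlastu
        exact hlastu
    have hnb := no_better f hf G u hu A (w :: B) v hAB (List.cons_ne_nil _ _)
      (f.path G v) (f.valid G v hv)
    have hqin : seqOf G (v :: w :: B) ∈ Seqs G v := ⟨_, hq, rfl⟩
    obtain ⟨_, hmaxv⟩ := hf.2 G v hv
    have hseq : seqOf G (v :: w :: B) = seqOf G (f.path G v) := by
      by_contra hne
      exact hnb (hmaxv _ hqin hne)
    have hrank : G.rank (v, w) = G.rank (v, w₀) := by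
      have h1 : seqOf G (v :: w :: B) = G.rank (v, w) :: seqOf G (w :: B) := rfl
      have h2 : seqOf G (f.path G v) = G.rank (v, w₀) :: seqOf G (w₀ :: t₀) := by
        rw [hp₀e]; rfl
      rw [h1, h2] at hseq
      injection hseq
    have hvw : (v, w) ∈ G.E := hEu _ hmem
    have hvw₀ : (v, w₀) ∈ G.E := by
      apply hE0
      show (v, w₀) ∈ edges (f.path G v)
      rw [hp₀e, edges_cons_cons]
      exact List.mem_cons_self
    have hprop := G.rank_prop v hv.1
    have hcard : ((G.E.filter (fun e => e.1 = v)).image G.rank).card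
        = (G.E.filter (fun e => e.1 = v)).card := by
      rw [hprop, Nat.card_Icc]
      omega
    have hinj := Finset.injOn_of_card_image_eq hcard
    have hw1 : (v, w) ∈ (G.E.filter (fun e => e.1 = v)) := Finset.mem_filter.mpr ⟨hvw, rfl⟩
    have hw2 : (v, w₀) ∈ (G.E.filter (fun e => e.1 = v)) := Finset.mem_filter.mpr ⟨hvw₀, rfl⟩
    have hpair := hinj hw1 hw2 hrank
    exact (Prod.ext_iff.mp hpair).2


end RankedDelegation
end
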